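/- Fix k ≥ 1 and a sequence z^∞ over a finite alphabet 𝒵, and let M^∞ = (M_1, M_2, …) be drawn iid Bernoulli(1/2). Then P(M^∞ ∈ 𝓜_k(z^∞)) = 0; that is, almost surely there do NOT exist a bounded sequence of nonnegative integer partition lengths {L_i} and a limiting distribution p̂ of the associated k-partition triples satisfying E_p̂[L] > H_p̂(M^L | z^k) + 1. -/

import Mathlib

open MeasureTheory ProbabilityTheory Filter
open scoped ENNReal

/-- Partial sums of the partition lengths: `partSum L i = L_1 + ⋯ + L_i`. -/
def partSum (L : ℕ → ℕ) (i : ℕ) : ℕ := ∑ j ∈ Finset.range i, L j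

/-- The `i`-th triple of the `k`-partition of `(M, w)` according to the partition lengths
`L`: the length `L i`, the `i`-th `M`-block (the `L i` source bits starting after the
first `L_1 + ⋯ + L_i` ones), and the `i`-th `k`-block of the side-information sequence
`w`. -/
def kTriple {𝒲 : Type*} (k : ℕ) (w : ℕ → 𝒲) (M : ℕ → Bool) (L : ℕ → ℕ) (i : ℕ) :
    ℕ × List Bool × (Fin k → 𝒲) :=
  (L i,
   List.ofFn (fun t : Fin (L i) => M (partSum L i + (t : ℕ))),
   fun t : Fin k => w (k * i + (t : ℕ)))

/-- First-order empirical distribution of the first `n` terms of a sequence `f`. -/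
noncomputable def empDist {T : Type*} [DecidableEq T] (f : ℕ → T) (n : ℕ) (t : T) : ℝ :=
  (((Finset.range n).filter (fun i => f i = t)).card : ℝ) / (n : ℝ)

/-- Base-2 Shannon entropy of a distribution on an arbitrary type, via `tsum`. -/
noncomputable def entT {T : Type*} (q : T → ℝ) : ℝ :=
  ∑' t, -(q t * Real.logb 2 (q t))

/-- Membership in the paper's set `𝓜_k(w^∞)`: a binary sequence `M` belongs to it iff
there exist a bounded sequence of nonnegative integer partition lengths `L` and a
limiting distribution `phat` (a probability distribution arising as the pointwise limit,
along some subsequence of times, of the first-order empirical distributions of the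
`k`-partition triples) such that `E_phat[L] > H_phat(M-block | w-block) + 1`, where the
conditional entropy is `H(M-block, w-block) − H(w-block)` under `phat`. -/
def MemMk {𝒲 : Type*} [DecidableEq 𝒲] (k : ℕ) (w : ℕ → 𝒲) (M : ℕ → Bool) : Prop :=
  ∃ (B : ℕ) (L : ℕ → ℕ), (∀ i, L i ≤ B) ∧
    ∃ (φ : ℕ → ℕ) (phat : ℕ × List Bool × (Fin k → 𝒲) → ℝ),
      StrictMono φ ∧
      (∀ t, Tendsto (fun j => empDist (kTriple k w M L) (φ j) t) atTop (nhds (phat t))) ∧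
      (∀ t, 0 ≤ phat t) ∧ HasSum phat 1 ∧
      (∑' t : ℕ × List Bool × (Fin k → 𝒲), phat t * (t.1 : ℝ)) >
        (entT (fun mw : List Bool × (Fin k → 𝒲) => ∑' l : ℕ, phat (l, mw.1, mw.2))
          - entT (fun v : Fin k → 𝒲 => ∑' lm : ℕ × List Bool, phat (lm.1, lm.2, v))) + 1

/-!
Cut the source into the blocks of the partition and pair each block with its side-information
block. If `M ∈ 𝓜_k(z)` with lengths bounded by `B`, then, both sides of the defining inequality
being continuous in the distribution, the empirical distribution of the first `n` pairs satisfies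
`Ĥ(block | side block) + 1 < Ê[L]` for infinitely many `n`. For such a block sequence `x`,
`2^(-|x|) ≤ 2^(-n) ∏ p̂(xᵢ | wᵢ)`, and by the method of types these empirical conditional
likelihoods sum to at most `(n + 1)^D` over all `x`, `D` the number of possible pairs. Hence the
probability that the source begins with such a block sequence is at most `2^(-n) (n + 1)^D`,
which is summable, and Borel–Cantelli concludes.
-/

open Finset Real

namespace KPartition

section TypeCount

variable {γ : Type*} [DecidableEq γ] {n : ℕ}

def typeCount (f : Fin n → γ) (c : γ) : ℕ := #{i | f i = c}

noncomputable def empirical (f : Fin n → γ) (c : γ) : ℝ := typeCount f c / n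

lemma empDist_eq_empirical (f : ℕ → γ) (n : ℕ) (c : γ) :
    empDist f n c = empirical (fun i : Fin n => f i) c := by
  rw [empDist, empirical, typeCount, card_filter, card_filter,
    Fin.sum_univ_eq_sum_range (fun i => if f i = c then 1 else 0)]

lemma typeCount_apply_pos (f : Fin n → γ) (i : Fin n) : 0 < typeCount f (f i) :=
  card_pos.2 ⟨i, mem_filter.2 ⟨mem_univ i, rfl⟩⟩

lemma typeCount_le (f : Fin n → γ) (c : γ) : typeCount f c ≤ n :=
  (card_filter_le _ _).trans_eq (card_fin n)

variable [Fintype γ]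

lemma sum_comp_eq_sum_typeCount (f : Fin n → γ) (g : γ → ℝ) :
    ∑ i, g (f i) = ∑ c, typeCount f c * g c := by
  rw [← sum_fiberwise univ f]
  refine sum_congr rfl fun c _ => ?_
  rw [sum_congr rfl fun i hi => congrArg g (mem_filter.1 hi).2, sum_const, nsmul_eq_mul]
  rfl

lemma sum_typeCount (f : Fin n → γ) : ∑ c, (typeCount f c : ℝ) = n := by
  simpa using (sum_comp_eq_sum_typeCount f fun _ => 1).symm

lemma mul_sum_empirical_mul (f : Fin n → γ) (g : γ → ℝ) :
    n * ∑ c, empirical f c * g c = ∑ i, g (f i) := by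
  rcases n.eq_zero_or_pos with rfl | hn
  · simp
  rw [sum_comp_eq_sum_typeCount, mul_sum]
  refine sum_congr rfl fun c _ => ?_
  rw [empirical]
  field_simp

lemma mul_sum_negMulLog_empirical (f : Fin n → γ) :
    n * ∑ c, negMulLog (empirical f c)
      = n * log n - ∑ c, typeCount f c * log (typeCount f c) := by
  rcases n.eq_zero_or_pos with rfl | hn
  · simp [empirical, typeCount]
  have hterm : ∀ c, n * negMulLog (empirical f c)
      = typeCount f c * log n - typeCount f c * log (typeCount f c) := by
    intro c
    rcases (typeCount f c).eq_zero_or_pos with h | h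
    · simp [empirical, h]
    rw [empirical, negMulLog, log_div (by positivity) (by positivity)]
    field_simp
    ring
  rw [mul_sum, sum_congr rfl fun c _ => hterm c, sum_sub_distrib, ← sum_mul, sum_typeCount]

end TypeCount

section CondEntropy

variable {α β : Type*}

noncomputable def condEntropy [Fintype α] [Fintype β] (p : α × β → ℝ) : ℝ :=
  (∑ c, negMulLog (p c) - ∑ b, negMulLog (∑ a, p (a, b))) / log 2

lemma continuous_condEntropy [Fintype α] [Fintype β] :
    Continuous (condEntropy : (α × β → ℝ) → ℝ) := by
  unfold condEntropy
  fun_prop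

variable [DecidableEq α] [DecidableEq β] {n : ℕ}

/-- The probability of `x` under the empirical conditional distribution of `x` given `w`. -/
noncomputable def condLikelihood (w : Fin n → β) (x : Fin n → α) : ℝ :=
  ∏ i, (typeCount (fun j => (x j, w j)) (x i, w i) : ℝ) / typeCount w (w i)

lemma condLikelihood_pos (w : Fin n → β) (x : Fin n → α) : 0 < condLikelihood w x :=
  prod_pos fun i _ =>
    div_pos (mod_cast typeCount_apply_pos _ i) (mod_cast typeCount_apply_pos w i)

variable [Fintype α]

lemma sum_typeCount_pair (x : Fin n → α) (w : Fin n → β) (b : β) :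
    ∑ a, typeCount (fun i => (x i, w i)) (a, b) = typeCount w b := by
  rw [typeCount, card_eq_sum_card_fiberwise (f := fun i => x i) (t := univ) fun _ _ => mem_univ _]
  refine sum_congr rfl fun a _ => congrArg card ?_
  ext i
  simp only [mem_filter, mem_univ, true_and, Prod.ext_iff]
  tauto

lemma sum_prod_typeCount_div_eq_one (w : Fin n → β) (x₀ : Fin n → α) :
    ∑ x : Fin n → α, ∏ i, (typeCount (fun j => (x₀ j, w j)) (x i, w i) : ℝ) / typeCount w (w i)
      = 1 := by
  rw [← Fintype.prod_sum fun i a =>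
    (typeCount (fun j => (x₀ j, w j)) (a, w i) : ℝ) / typeCount w (w i)]
  refine prod_eq_one fun i _ => ?_
  rw [← sum_div, div_eq_one_iff_eq (mod_cast (typeCount_apply_pos w i).ne'),
    ← sum_typeCount_pair x₀ w (w i), Nat.cast_sum]

variable [Fintype β]

lemma log_condLikelihood (w : Fin n → β) (x : Fin n → α) :
    log (condLikelihood w x)
      = ∑ c, typeCount (fun j => (x j, w j)) c * log (typeCount (fun j => (x j, w j)) c)
        - ∑ b, typeCount w b * log (typeCount w b) := by
  have hlog : ∀ i, log ((typeCount (fun j => (x j, w j)) (x i, w i) : ℝ) / typeCount w (w i))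
      = log (typeCount (fun j => (x j, w j)) (x i, w i)) - log (typeCount w (w i)) := fun i =>
    log_div (mod_cast (typeCount_apply_pos _ i).ne') (mod_cast (typeCount_apply_pos w i).ne')
  rw [condLikelihood, log_prod fun i _ => (div_pos (mod_cast typeCount_apply_pos _ i)
      (mod_cast typeCount_apply_pos w i)).ne',
    sum_congr rfl fun i _ => hlog i, sum_sub_distrib,
    sum_comp_eq_sum_typeCount (fun j => (x j, w j)) fun c => log (typeCount _ c),
    sum_comp_eq_sum_typeCount w fun b => log (typeCount w b)]

lemma mul_condEntropy_empirical (w : Fin n → β) (x : Fin n → α) :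
    n * condEntropy (empirical fun i => (x i, w i)) = -logb 2 (condLikelihood w x) := by
  have hmarg : ∀ b, ∑ a, empirical (fun i => (x i, w i)) (a, b) = empirical w b := by
    intro b
    simp only [empirical, ← sum_div]
    exact_mod_cast congrArg (fun m : ℕ => (m : ℝ) / n) (sum_typeCount_pair x w b)
  rw [condEntropy, logb, log_condLikelihood, mul_div_assoc', mul_sub]
  simp only [hmarg]
  rw [mul_sum_negMulLog_empirical, mul_sum_negMulLog_empirical]
  ring

lemma sum_condLikelihood_le (w : Fin n → β) :
    ∑ x : Fin n → α, condLikelihood w x ≤ (n + 1) ^ Fintype.card (α × β) := by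
  set types : Finset (α × β → ℕ) := Fintype.piFinset fun _ => range (n + 1)
  have hmaps : ∀ x ∈ (univ : Finset (Fin n → α)),
      typeCount (fun j => (x j, w j)) ∈ types := fun x _ =>
    Fintype.mem_piFinset.2 fun c => mem_range.2 (Nat.lt_succ_of_le (typeCount_le _ c))
  -- On a joint type class the likelihood is a product of weights not depending on `x`.
  have hfiber : ∀ τ ∈ types,
      ∑ x : Fin n → α with typeCount (fun j => (x j, w j)) = τ, condLikelihood w x ≤ 1 := by
    intro τ _
    rcases (univ.filter fun x : Fin n → α =>
      typeCount (fun j => (x j, w j)) = τ).eq_empty_or_nonempty with h | ⟨x₀, hx₀⟩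
    · simp [h]
    calc ∑ x : Fin n → α with typeCount (fun j => (x j, w j)) = τ, condLikelihood w x
        = ∑ x : Fin n → α with typeCount (fun j => (x j, w j)) = τ,
            ∏ i, (typeCount (fun j => (x₀ j, w j)) (x i, w i) : ℝ) / typeCount w (w i) := by
          refine sum_congr rfl fun x hx => ?_
          rw [condLikelihood, (mem_filter.1 hx).2, (mem_filter.1 hx₀).2]
      _ ≤ ∑ x : Fin n → α,
            ∏ i, (typeCount (fun j => (x₀ j, w j)) (x i, w i) : ℝ) / typeCount w (w i) :=
          sum_le_univ_sum_of_nonneg fun _ => by positivity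
      _ = 1 := sum_prod_typeCount_div_eq_one w x₀
  calc ∑ x, condLikelihood w x
      = ∑ τ ∈ types, ∑ x : Fin n → α with typeCount (fun j => (x j, w j)) = τ,
          condLikelihood w x := (sum_fiberwise_of_maps_to hmaps _).symm
    _ ≤ ∑ _τ ∈ types, (1 : ℝ) := sum_le_sum hfiber
    _ = (n + 1) ^ Fintype.card (α × β) := by
      rw [sum_const, Fintype.card_piFinset, prod_const, card_range, card_univ]
      simp

lemma inv_two_pow_le_mul_condLikelihood (w : Fin n → β) (x : Fin n → α) {s : ℕ}
    (h : n * (condEntropy (empirical fun i => (x i, w i)) + 1) ≤ s) :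
    (2⁻¹ : ℝ) ^ s ≤ 2⁻¹ ^ n * condLikelihood w x := by
  have hlog : (n : ℝ) - s ≤ logb 2 (condLikelihood w x) := by
    rw [mul_add, mul_one, mul_condEntropy_empirical] at h
    linarith
  calc (2⁻¹ : ℝ) ^ s = 2⁻¹ ^ n * (2 : ℝ) ^ ((n : ℝ) - s) := by
        rw [rpow_sub two_pos, rpow_natCast, rpow_natCast, inv_pow, inv_pow]
        field_simp
    _ ≤ 2⁻¹ ^ n * (2 : ℝ) ^ logb 2 (condLikelihood w x) := by
        gcongr
        norm_num
    _ = 2⁻¹ ^ n * condLikelihood w x := by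
        rw [rpow_logb two_pos (by norm_num) (condLikelihood_pos w x)]

theorem sum_inv_two_pow_le (w : Fin n → β) (len : α → ℕ) :
    ∑ x : Fin n → α with condEntropy (empirical fun i => (x i, w i)) + 1
        < ∑ c, empirical (fun i => (x i, w i)) c * len c.1,
      (2⁻¹ : ℝ) ^ ∑ i, len (x i) ≤ 2⁻¹ ^ n * (n + 1) ^ Fintype.card (α × β) := by
  calc _ ≤ ∑ x : Fin n → α with condEntropy (empirical fun i => (x i, w i)) + 1
          < ∑ c, empirical (fun i => (x i, w i)) c * len c.1, 2⁻¹ ^ n * condLikelihood w x := by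
        refine sum_le_sum fun x hx => inv_two_pow_le_mul_condLikelihood w x ?_
        push_cast
        rw [← mul_sum_empirical_mul (fun i => (x i, w i)) fun c => (len c.1 : ℝ)]
        exact mul_le_mul_of_nonneg_left (mem_filter.1 hx).2.le n.cast_nonneg
    _ ≤ ∑ x : Fin n → α, 2⁻¹ ^ n * condLikelihood w x :=
        sum_le_univ_sum_of_nonneg fun x => by positivity [condLikelihood_pos w x]
    _ ≤ 2⁻¹ ^ n * (n + 1) ^ Fintype.card (α × β) := by
        rw [← mul_sum]
        exact mul_le_mul_of_nonneg_left (sum_condLikelihood_le w) (by positivity)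

end CondEntropy

section Support

variable {γ δ : Type*} [DecidableEq δ] {f : ℕ → γ} {g : γ → δ}

lemma empDist_comp_eq_zero {t : δ} (ht : t ∉ Set.range g) (n : ℕ) :
    empDist (g ∘ f) n t = 0 := by
  have hempty : (range n).filter (fun i => (g ∘ f) i = t) = ∅ :=
    filter_eq_empty_iff.2 fun i _ h => ht ⟨f i, h⟩
  rw [empDist, hempty, card_empty, Nat.cast_zero, zero_div]

lemma eq_zero_of_tendsto_empDist_of_notMem_range {φ : ℕ → ℕ} {p : δ → ℝ} {t : δ}
    (hconv : Tendsto (fun j => empDist (g ∘ f) (φ j) t) atTop (nhds (p t)))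
    (ht : t ∉ Set.range g) : p t = 0 :=
  tendsto_nhds_unique hconv <| by simp only [empDist_comp_eq_zero ht, tendsto_const_nhds]

lemma empDist_comp_apply [DecidableEq γ] (hg : Function.Injective g) (n : ℕ) (c : γ) :
    empDist (g ∘ f) n (g c) = empDist f n c := by
  simp only [empDist, Function.comp_apply, hg.eq_iff]

end Support

lemma entT_eq_tsum_negMulLog {T : Type*} (q : T → ℝ) :
    entT q = (∑' t, negMulLog (q t)) / log 2 := by
  rw [entT, ← tsum_div_const]
  congr 1 with t
  rw [negMulLog, logb]
  ring

noncomputable def blocks (B : ℕ) : Finset (List Bool) := (List.finite_length_le Bool B).toFinset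

section BlockTriple

variable {β : Type*} {B : ℕ}

def blockTriple (x : blocks B × β) : ℕ × List Bool × β := ((x.1 : List Bool).length, x.1, x.2)

lemma blockTriple_injective : Function.Injective (blockTriple (B := B) (β := β)) :=
  fun _ _ h => Prod.ext (Subtype.ext (congrArg (·.2.1) h)) (congrArg (·.2.2) h)

variable (phat : ℕ × List Bool × β → ℝ)
  (hphat : ∀ t ∉ Set.range (blockTriple (B := B)), phat t = 0)
include hphat

lemma tsum_fst_eq_blockTriple (a : blocks B) (b : β) :
    ∑' l : ℕ, phat (l, a, b) = phat (blockTriple (a, b)) :=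
  tsum_eq_single _ fun l hl => hphat _ fun ⟨y, hy⟩ => hl <| by
    obtain rfl := Subtype.ext (congrArg (·.2.1) hy)
    obtain rfl := congrArg (·.2.2) hy
    exact (congrArg (·.1) hy).symm

variable [Fintype β]

lemma tsum_mul_fst_eq_sum_blockTriple :
    ∑' t, phat t * (t.1 : ℝ)
      = ∑ x : blocks B × β, phat (blockTriple x) * ((x.1 : List Bool).length : ℝ) := by
  rw [← blockTriple_injective.tsum_eq (f := fun t => phat t * (t.1 : ℝ)), tsum_fintype]
  · rfl
  · intro t ht
    by_contra hr
    exact ht (by simp [hphat t hr])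

lemma entT_sub_entT_eq :
    entT (fun ab : List Bool × β => ∑' l : ℕ, phat (l, ab.1, ab.2))
        - entT (fun b : β => ∑' la : ℕ × List Bool, phat (la.1, la.2, b))
      = condEntropy (phat ∘ blockTriple (B := B)) := by
  have hjoint : ∑' ab : List Bool × β, negMulLog (∑' l : ℕ, phat (l, ab.1, ab.2))
      = ∑ x : blocks B × β, negMulLog (phat (blockTriple x)) := by
    have hinj : Function.Injective fun x : blocks B × β => ((x.1 : List Bool), x.2) :=
      fun _ _ h => Prod.ext (Subtype.ext (Prod.ext_iff.1 h).1) (Prod.ext_iff.1 h).2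
    rw [← hinj.tsum_eq, tsum_fintype]
    · exact sum_congr rfl fun x _ => by rw [tsum_fst_eq_blockTriple phat hphat]
    · intro ab hab
      obtain ⟨l, hl⟩ : ∃ l, phat (l, ab.1, ab.2) ≠ 0 := by
        by_contra! h
        exact hab (by simp [h])
      obtain ⟨⟨a, b⟩, hx⟩ := not_not.1 (mt (hphat _) hl)
      exact ⟨(a, b), Prod.ext (congrArg (·.2.1) hx) (congrArg (·.2.2) hx)⟩
  have hmarg : ∀ b : β, ∑' la : ℕ × List Bool, phat (la.1, la.2, b)
      = ∑ a : blocks B, phat (blockTriple (a, b)) := by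
    intro b
    have hinj : Function.Injective fun a : blocks B => ((a : List Bool).length, (a : List Bool)) :=
      fun _ _ h => Subtype.ext (Prod.ext_iff.1 h).2
    rw [← hinj.tsum_eq, tsum_fintype]
    · rfl
    · intro la hla
      obtain ⟨⟨a, b'⟩, hx⟩ := not_not.1 (mt (hphat _) hla)
      exact ⟨a, Prod.ext (congrArg (·.1) hx) (congrArg (·.2.1) hx)⟩
  rw [entT_eq_tsum_negMulLog, entT_eq_tsum_negMulLog, hjoint, tsum_fintype, ← sub_div,
    condEntropy]
  simp only [hmarg, Function.comp_apply]

end BlockTriple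

def prefixSet (l : List Bool) : Set (ℕ → Bool) := {M | ∀ j : Fin l.length, M j = l[j]}

lemma mem_prefixSet_ofFn (M : ℕ → Bool) (m : ℕ) :
    M ∈ prefixSet (List.ofFn fun j : Fin m => M j) := fun j => by simp

lemma flatten_ofFn_ofFn_partSum (M : ℕ → Bool) (L : ℕ → ℕ) (n : ℕ) :
    (List.ofFn fun i : Fin n => List.ofFn fun t : Fin (L i) => M (partSum L i + t)).flatten
      = List.ofFn fun j : Fin (partSum L n) => M j := by
  induction n with
  | zero => simp [partSum]
  | succ n ih =>
    have hsucc : partSum L (n + 1) = partSum L n + L n := sum_range_succ L n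
    rw [List.ofFn_succ', List.concat_eq_append, List.flatten_append]
    simp [ih, hsucc, List.ofFn_add, Fin.last]

section Realization

variable {𝒵 : Type*} {B : ℕ} {L : ℕ → ℕ}

def block (M : ℕ → Bool) (hL : ∀ i, L i ≤ B) (i : ℕ) : blocks B :=
  ⟨List.ofFn fun t : Fin (L i) => M (partSum L i + t), by simpa [blocks] using hL i⟩

def sideBlock (k : ℕ) (z : ℕ → 𝒵) (i : ℕ) : Fin k → 𝒵 := fun t => z (k * i + t)

lemma kTriple_eq_blockTriple (k : ℕ) (z : ℕ → 𝒵) (M : ℕ → Bool) (hL : ∀ i, L i ≤ B) :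
    kTriple k z M L = blockTriple ∘ fun i => (block M hL i, sideBlock k z i) := by
  funext i
  exact Prod.ext List.length_ofFn.symm rfl

variable [Fintype 𝒵] [DecidableEq 𝒵]

/-- Block sequences whose empirical distribution, paired with the side blocks, satisfies the
inequality defining `𝓜_k`. -/
noncomputable def badBlockSeqs (k : ℕ) (z : ℕ → 𝒵) (B n : ℕ) : Finset (Fin n → blocks B) :=
  {x | condEntropy (empirical fun i => (x i, sideBlock k z i)) + 1
    < ∑ c, empirical (fun i => (x i, sideBlock k z i)) c * ((c.1 : List Bool).length : ℝ)}

def badPrefixes (k : ℕ) (z : ℕ → 𝒵) (B n : ℕ) : Set (ℕ → Bool) :=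
  ⋃ x ∈ badBlockSeqs k z B n, prefixSet (List.ofFn fun i => (x i : List Bool)).flatten

lemma frequently_mem_badPrefixes_of_memMk {k : ℕ} {z : ℕ → 𝒵} {M : ℕ → Bool}
    (h : MemMk k z M) : ∃ B, ∃ᶠ n in atTop, M ∈ badPrefixes k z B n := by
  obtain ⟨B, L, hL, φ, phat, hφ, hconv, -, -, hgt⟩ := h
  refine ⟨B, ?_⟩
  rw [kTriple_eq_blockTriple k z M hL] at hconv
  have hphat : ∀ t ∉ Set.range (blockTriple (B := B)), phat t = 0 := fun t ht =>
    eq_zero_of_tendsto_empDist_of_notMem_range (hconv t) ht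
  have hemp : Tendsto (fun j => empirical fun i : Fin (φ j) => (block M hL i, sideBlock k z i))
      atTop (nhds (phat ∘ blockTriple)) := tendsto_pi_nhds.2 fun x => by
    rw [Function.comp_apply]
    simpa only [empDist_comp_apply blockTriple_injective, empDist_eq_empirical]
      using hconv (blockTriple x)
  rw [gt_iff_lt, entT_sub_entT_eq phat hphat, tsum_mul_fst_eq_sum_blockTriple phat hphat] at hgt
  have hcont : Continuous fun p : blocks B × (Fin k → 𝒵) → ℝ =>
      (condEntropy p + 1, ∑ c, p c * ((c.1 : List Bool).length : ℝ)) := by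
    have := continuous_condEntropy (α := blocks B) (β := Fin k → 𝒵)
    fun_prop
  have hev := (hcont.tendsto _ |>.comp hemp).eventually (isOpen_lt_prod.mem_nhds hgt)
  refine hφ.tendsto_atTop.frequently (hev.mono fun j hj => ?_).frequently
  refine Set.mem_biUnion (x := fun i : Fin (φ j) => block M hL i)
    (mem_filter.2 ⟨mem_univ _, hj⟩) ?_
  show M ∈ prefixSet (List.ofFn fun i : Fin (φ j) =>
    List.ofFn fun t : Fin (L i) => M (partSum L i + t)).flatten
  rw [flatten_ofFn_ofFn_partSum]
  exact mem_prefixSet_ofFn M _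

end Realization

section Probability

variable {Ω : Type*} [MeasurableSpace Ω] {μ : Measure Ω} [IsProbabilityMeasure μ]
  {M : ℕ → Ω → Bool} {𝒵 : Type*} [Fintype 𝒵] [DecidableEq 𝒵]

lemma measure_preimage_singleton_eq_inv_two (hMmeas : ∀ i, Measurable (M i))
    (hMbern : ∀ i, μ {ω | M i ω = true} = 1/2) (i : ℕ) (b : Bool) :
    μ (M i ⁻¹' {b}) = 2⁻¹ := by
  have htrue : μ (M i ⁻¹' {true}) = 2⁻¹ := by rw [← one_div]; exact hMbern i
  cases b
  · have hcompl : M i ⁻¹' {false} = (M i ⁻¹' {true})ᶜ := by ext; simp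
    rw [hcompl, prob_compl_eq_one_sub (hMmeas i (measurableSet_singleton _)), htrue,
      ENNReal.one_sub_inv_two]
  · exact htrue

lemma measure_prefixSet (hMmeas : ∀ i, Measurable (M i)) (hMindep : iIndepFun M μ)
    (hMbern : ∀ i, μ {ω | M i ω = true} = 1/2) (l : List Bool) :
    μ {ω | (fun i => M i ω) ∈ prefixSet l} = 2⁻¹ ^ l.length := by
  have hset : {ω | (fun i => M i ω) ∈ prefixSet l}
      = ⋂ j ∈ range l.length, M j ⁻¹' {l.getD j false} := by
    ext ω
    simp only [prefixSet, Fin.forall_iff, Set.mem_ofPred_eq, Set.mem_iInter, mem_range,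
      Set.mem_preimage, Set.mem_singleton_iff, Fin.getElem_fin]
    exact forall₂_congr fun j hj => by rw [List.getD_eq_getElem _ _ hj]
  rw [hset, hMindep.meas_biInter fun j _ => ⟨{l.getD j false}, measurableSet_singleton _, rfl⟩,
    prod_congr rfl fun j _ => measure_preimage_singleton_eq_inv_two hMmeas hMbern j _,
    prod_const, card_range]

lemma measure_badPrefixes_le (hMmeas : ∀ i, Measurable (M i)) (hMindep : iIndepFun M μ)
    (hMbern : ∀ i, μ {ω | M i ω = true} = 1/2) (k : ℕ) (z : ℕ → 𝒵) (B n : ℕ) :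
    μ {ω | (fun i => M i ω) ∈ badPrefixes k z B n}
      ≤ ENNReal.ofReal (2⁻¹ ^ n * (n + 1) ^ Fintype.card (blocks B × (Fin k → 𝒵))) := by
  have hlength : ∀ x : Fin n → blocks B,
      (List.ofFn fun i => (x i : List Bool)).flatten.length = ∑ i, (x i : List Bool).length := by
    intro x
    simp [List.length_flatten, List.sum_ofFn]
  calc μ {ω | (fun i => M i ω) ∈ badPrefixes k z B n}
      ≤ ∑ x ∈ badBlockSeqs k z B n,
          μ {ω | (fun i => M i ω) ∈ prefixSet (List.ofFn fun i => (x i : List Bool)).flatten} := by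
        simpa only [badPrefixes, Set.mem_iUnion, Set.ofPred_exists] using
          measure_biUnion_finset_le (badBlockSeqs k z B n) _
    _ = ∑ x ∈ badBlockSeqs k z B n, ENNReal.ofReal (2⁻¹ ^ ∑ i, (x i : List Bool).length) := by
        refine sum_congr rfl fun x _ => ?_
        rw [measure_prefixSet hMmeas hMindep hMbern, hlength, ENNReal.ofReal_pow (by norm_num),
          ENNReal.ofReal_inv_of_pos two_pos, ENNReal.ofReal_ofNat]
    _ = ENNReal.ofReal (∑ x ∈ badBlockSeqs k z B n, 2⁻¹ ^ ∑ i, (x i : List Bool).length) :=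
        (ENNReal.ofReal_sum_of_nonneg fun _ _ => by positivity).symm
    _ ≤ _ := ENNReal.ofReal_le_ofReal <|
        sum_inv_two_pow_le (fun i => sideBlock k z i) fun a : blocks B => (a : List Bool).length

lemma summable_inv_two_pow_mul_succ_pow (D : ℕ) :
    Summable fun n : ℕ => (2⁻¹ : ℝ) ^ n * (n + 1) ^ D := by
  have hshift := (summable_nat_add_iff 1).2
    (summable_pow_mul_geometric_of_norm_lt_one D (r := (2⁻¹ : ℝ)) (by norm_num))
  refine (hshift.mul_left 2).congr fun n => ?_
  push_cast
  ring

lemma measure_frequently_badPrefixes (hMmeas : ∀ i, Measurable (M i)) (hMindep : iIndepFun M μ)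
    (hMbern : ∀ i, μ {ω | M i ω = true} = 1/2) (k : ℕ) (z : ℕ → 𝒵) (B : ℕ) :
    μ {ω | ∃ᶠ n in atTop, (fun i => M i ω) ∈ badPrefixes k z B n} = 0 := by
  refine measure_setOfPred_frequently_eq_zero (ne_top_of_le_ne_top ?_
    (ENNReal.tsum_le_tsum fun n => measure_badPrefixes_le hMmeas hMindep hMbern k z B n))
  rw [← ENNReal.ofReal_tsum_of_nonneg (fun n => by positivity)
    (summable_inv_two_pow_mul_succ_pow _)]
  exact ENNReal.ofReal_ne_top

end Probability

end KPartition

theorem Mk_is_null_general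
    {Ω : Type*} [MeasurableSpace Ω] (μ : Measure Ω) [IsProbabilityMeasure μ]
    {𝒵 : Type*} [Fintype 𝒵] [DecidableEq 𝒵] (z : ℕ → 𝒵) (k : ℕ)
    (M : ℕ → Ω → Bool) (hMmeas : ∀ i, Measurable (M i))
    (hMindep : iIndepFun M μ)
    (hMbern : ∀ i, μ {ω | M i ω = true} = 1/2) :
    μ {ω | MemMk k z (fun i => M i ω)} = 0 := by
  refine measure_mono_null (fun ω hω => ?_) (measure_iUnion_null fun B =>
    KPartition.measure_frequently_badPrefixes hMmeas hMindep hMbern k z B)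
  obtain ⟨B, hB⟩ := KPartition.frequently_mem_badPrefixes_of_memMk hω
  exact Set.mem_iUnion.2 ⟨B, hB⟩

/-- The paper's Lemma 4: for a fixed finite-alphabet side-information sequence `z` and an
iid Bernoulli(1/2) source `M`, the probability that `M ∈ 𝓜_k(z^∞)` is zero. -/
theorem Mk_is_null
    {Ω : Type*} [MeasurableSpace Ω] (μ : Measure Ω) [IsProbabilityMeasure μ]
    {𝒵 : Type*} [Fintype 𝒵] [DecidableEq 𝒵] (z : ℕ → 𝒵) (k : ℕ) (hk : 1 ≤ k)
    (M : ℕ → Ω → Bool) (hMmeas : ∀ i, Measurable (M i))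
    (hMindep : iIndepFun M μ)
    (hMbern : ∀ i, μ {ω | M i ω = true} = 1/2) :
    μ {ω | MemMk k z (fun i => M i ω)} = 0 :=
  Mk_is_null_general μ z k M hMmeas hMindep hMbern
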